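/- If A is a linear endomorphism of V (with dim V ≥ 3) and τ is an anti-symmetric bilinear form on V of rank at least 4, then A*R^Λ_τ = R^Λ_τ if and only if A*τ = τ or A*τ = −τ. That is, the structure group of R^Λ_τ equals G^±_τ. -/
import Mathlib


variable {V : Type*} [AddCommGroup V] [Module ℝ V] [FiniteDimensional ℝ V]

noncomputable def RLb (τ : V →ₗ[ℝ] V →ₗ[ℝ] ℝ) (x y z w : V) : ℝ :=
  τ x w * τ y z - τ x z * τ y w - 2 * τ x y * τ z w

private lemma key_sign (t S : V → V → ℝ)
    (htadd : ∀ x x' y, t (x + x') y = t x y + t x' y)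
    (htsub : ∀ x x' y, t (x - x') y = t x y - t x' y)
    (hSadd : ∀ x x' y, S (x + x') y = S x y + S x' y)
    (hSsub : ∀ x x' y, S (x - x') y = S x y - S x' y)
    (hmulr : ∀ x x' y, S x y * S x' y = t x y * t x' y)
    (hmulc : ∀ x y y', S x y * S x y' = t x y * t x y')
    (x0 y0 : V) (hτ0 : t x0 y0 ≠ 0) (h00 : S x0 y0 = t x0 y0) :
    ∀ x y, S x y = t x y := by
  have hx0 : ∀ y, S x0 y = t x0 y := by
    intro y
    have := hmulc x0 y0 y
    rw [h00] at this
    exact mul_left_cancel₀ hτ0 this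
  have hy0 : ∀ x, S x y0 = t x y0 := by
    intro x
    have := hmulr x x0 y0
    rw [h00] at this
    exact mul_right_cancel₀ hτ0 this
  intro x y
  by_cases c : t x y0 + t x0 y0 = 0
  · -- use u = x - x0
    have hu0 : t (x - x0) y0 ≠ 0 := by
      rw [htsub]
      intro h
      apply hτ0
      linarith
    have hSu : S (x - x0) y0 = t (x - x0) y0 := hy0 _
    have := hmulc (x - x0) y0 y
    rw [hSu] at this
    have huy : S (x - x0) y = t (x - x0) y := mul_left_cancel₀ hu0 this
    rw [hSsub, htsub, hx0] at huy
    linarith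
  · have hu0 : t (x + x0) y0 ≠ 0 := by
      rw [htadd]; exact c
    have hSu : S (x + x0) y0 = t (x + x0) y0 := hy0 _
    have := hmulc (x + x0) y0 y
    rw [hSu] at this
    have huy : S (x + x0) y = t (x + x0) y := mul_left_cancel₀ hu0 this
    rw [hSadd, htadd, hx0] at huy
    linarith

theorem stmt_4 (τ : V →ₗ[ℝ] V →ₗ[ℝ] ℝ) (hτ : ∀ x y, τ x y = -τ y x)
    (hdim : 3 ≤ Module.finrank ℝ V)
    (hrank : 4 ≤ Module.finrank ℝ (LinearMap.range τ))
    (A : V →ₗ[ℝ] V) (hA : Function.Bijective A) :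
    (∀ x y z w, RLb τ (A x) (A y) (A z) (A w) = RLb τ x y z w) ↔
      ((∀ x y, τ (A x) (A y) = τ x y) ∨ (∀ x y, τ (A x) (A y) = -τ x y)) := by
  have hdiag : ∀ x : V, τ x x = 0 := by
    intro x; have := hτ x x; linarith
  constructor
  · intro h
    set S : V → V → ℝ := fun x y => τ (A x) (A y) with hS
    have hsq : ∀ x y, S x y ^ 2 = τ x y ^ 2 := by
      intro x y
      have h1 := h x y x y
      simp only [RLb] at h1
      have e1 : (τ (A y)) (A x) = -(τ (A x)) (A y) := by linarith [hτ (A x) (A y)]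
      have e2 : (τ y) x = -(τ x) y := by linarith [hτ x y]
      rw [e1, e2, hdiag (A x), hdiag (A y), hdiag x, hdiag y] at h1
      simp only [hS]
      nlinarith [h1]
    have hSadd : ∀ x x' y, S (x + x') y = S x y + S x' y := by
      intro x x' y; simp [hS, map_add]
    have hSsub : ∀ x x' y, S (x - x') y = S x y - S x' y := by
      intro x x' y; simp [hS, map_sub]
    have htadd : ∀ x x' y, τ (x + x') y = τ x y + τ x' y := by
      intro x x' y; simp [map_add]
    have htsub : ∀ x x' y, τ (x - x') y = τ x y - τ x' y := by
      intro x x' y; simp [map_sub]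
    have hmulr : ∀ x x' y, S x y * S x' y = τ x y * τ x' y := by
      intro x x' y
      have h1 := hsq (x + x') y
      rw [hSadd, htadd] at h1
      have h2 := hsq x y
      have h3 := hsq x' y
      nlinarith [h1, h2, h3]
    have hmulc : ∀ x y y', S x y * S x y' = τ x y * τ x y' := by
      intro x y y'
      have h1 := hsq x (y + y')
      have e1 : S x (y + y') = S x y + S x y' := by simp [hS, map_add]
      have e2 : τ x (y + y') = τ x y + τ x y' := by simp [map_add]
      rw [e1, e2] at h1
      have h2 := hsq x y
      have h3 := hsq x y'
      nlinarith [h1, h2, h3]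
    -- τ ≠ 0
    obtain ⟨x0, y0, h0⟩ : ∃ x0 y0, τ x0 y0 ≠ 0 := by
      by_contra hc
      push_neg at hc
      have : τ = 0 := by ext x y; exact hc x y
      rw [this, LinearMap.range_zero, finrank_bot] at hrank
      omega
    have hcase : S x0 y0 = τ x0 y0 ∨ S x0 y0 = -τ x0 y0 := by
      have := hsq x0 y0
      have : (S x0 y0 - τ x0 y0) * (S x0 y0 + τ x0 y0) = 0 := by nlinarith [this]
      rcases mul_eq_zero.mp this with h' | h'
      · left; linarith
      · right; linarith
    rcases hcase with h00 | h00
    · left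
      exact key_sign (fun x y => τ x y) S htadd htsub hSadd hSsub hmulr hmulc x0 y0 h0 h00
    · right
      intro x y
      have := key_sign (fun x y => -τ x y) S
        (by intro x x' y; simp [map_add]; ring)
        (by intro x x' y; simp [map_sub]; ring)
        hSadd hSsub
        (by intro x x' y; rw [hmulr]; ring)
        (by intro x y y'; rw [hmulc]; ring)
        x0 y0 (by simpa using h0) (by simpa using h00) x y
      simpa using this
  · intro h x y z w
    rcases h with h | h <;> simp only [RLb, h] <;> ring
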